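/- Let p > n + 1 be a prime and let A be an n×n matrix over the p-adic integers Z_p with A^p = 1. Then A is the identity matrix. -/

import Mathlib

/-!
After the substitution `X ↦ X + 1`, the cyclotomic polynomial `Φ_p` is Eisenstein at `p`, so it is
irreducible over `ℚ_[p]` of degree `p - 1`. The minimal polynomial of `A` over `ℚ_[p]` divides
`X ^ p - 1 = Φ_p * (X - 1)` and has degree at most `n < p - 1`, so it is coprime to `Φ_p` and
divides `X - 1`.
-/

open Polynomial

theorem cyclotomic_prime_taylor_one_isEisensteinAt {R : Type*} [CommRing R] [IsDomain R]
    (p : ℕ) [Fact p.Prime] (hp : Prime (p : R)) :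
    (taylor 1 (cyclotomic p R)).IsEisensteinAt (Ideal.span {(p : R)}) := by
  refine Monic.isEisensteinAt_of_mem_of_notMem ((cyclotomic.monic p R).comp_X_add_C 1)
    ((Ideal.span_singleton_prime hp.ne_zero).2 hp).ne_top (fun {i} hi => ?_) ?_
  · have hZ := (cyclotomic_comp_X_add_one_isEisensteinAt p).mem (n := i)
    rw [← C_1, ← taylor_apply, natDegree_taylor, natDegree_cyclotomic,
      Ideal.submodule_span_eq, Ideal.mem_span_singleton] at hZ
    rw [natDegree_taylor, natDegree_cyclotomic] at hi
    have hmap : taylor 1 (cyclotomic p R) =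
        (taylor 1 (cyclotomic p ℤ)).map (Int.castRingHom R) := by
      simp
    rw [hmap, coeff_map, Ideal.mem_span_singleton]
    simpa using (Int.castRingHom R).map_dvd (hZ hi)
  · rw [taylor_coeff_zero, eval_one_cyclotomic_prime, Ideal.span_singleton_pow,
      Ideal.mem_span_singleton]
    rintro ⟨c, hc⟩
    refine hp.not_isUnit (IsUnit.of_mul_eq_one c ?_)
    rw [sq, mul_assoc] at hc
    exact mul_left_cancel₀ hp.ne_zero (hc.symm.trans (mul_one _).symm)

theorem cyclotomic_prime_irreducible_of_prime {R K : Type*} [CommRing R] [IsDomain R]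
    [IsIntegrallyClosed R] [Field K] [Algebra R K] [IsFractionRing R K]
    (p : ℕ) [hpp : Fact p.Prime] (hp : Prime (p : R)) : Irreducible (cyclotomic p K) := by
  have hmonic : (taylor 1 (cyclotomic p R)).Monic := (cyclotomic.monic p R).comp_X_add_C 1
  have hR : Irreducible (taylor 1 (cyclotomic p R)) :=
    (cyclotomic_prime_taylor_one_isEisensteinAt p hp).irreducible
      ((Ideal.span_singleton_prime hp.ne_zero).2 hp) hmonic.isPrimitive
      (by rw [natDegree_taylor, natDegree_cyclotomic]; exact Nat.totient_pos.2 hpp.out.pos)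
  have hK : Irreducible (taylor 1 (cyclotomic p K)) := by
    simpa using (hmonic.irreducible_iff_irreducible_map_fraction_map (K := K)).1 hR
  exact (MulEquiv.irreducible_iff (taylorEquiv (1 : K)).toMulEquiv).1 hK

theorem eq_one_of_pow_prime_eq_one_of_natDegree_minpoly_lt {K A : Type*} [Field K] [Ring A]
    [Algebra K A] {p : ℕ} [hp : Fact p.Prime] (hirr : Irreducible (cyclotomic p K)) {x : A}
    (hx : x ^ p = 1) (hdeg : (minpoly K x).natDegree < p - 1) : x = 1 := by
  have hint : IsIntegral K x := .of_pow hp.out.pos (hx ▸ isIntegral_one)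
  have hdvd : minpoly K x ∣ cyclotomic p K * (X - 1) := by
    rw [cyclotomic_prime_mul_X_sub_one]
    exact minpoly.dvd K x (by simp [hx])
  have hndvd : ¬ cyclotomic p K ∣ minpoly K x := fun h => by
    have := natDegree_le_of_dvd h (minpoly.ne_zero hint)
    rw [natDegree_cyclotomic, Nat.totient_prime hp.out] at this
    omega
  have hX : minpoly K x ∣ X - 1 :=
    (hirr.coprime_iff_not_dvd.2 hndvd).symm.dvd_of_dvd_mul_left hdvd
  simpa [sub_eq_zero] using aeval_eq_zero_of_dvd_aeval_eq_zero hX (minpoly.aeval K x)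

theorem Matrix.eq_one_of_pow_prime_eq_one {K ι : Type*} [Field K] [Fintype ι] [DecidableEq ι]
    {p : ℕ} [Fact p.Prime] (hirr : Irreducible (cyclotomic p K)) (hcard : Fintype.card ι + 1 < p)
    {M : Matrix ι ι K} (hM : M ^ p = 1) : M = 1 := by
  refine eq_one_of_pow_prime_eq_one_of_natDegree_minpoly_lt hirr hM ?_
  have := natDegree_le_of_dvd (Matrix.minpoly_dvd_charpoly M) M.charpoly_monic.ne_zero
  rw [Matrix.charpoly_natDegree_eq_dim] at this
  omega

/-- Let `p > n + 1` be a prime and let `A` be an `n × n` matrix over the `p`-adic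
integers `ℤ_[p]` with `A ^ p = 1`.  Then `A` is the identity matrix. -/
theorem padic_matrix_pth_power_trivial
    (p : ℕ) [Fact p.Prime] (n : ℕ) (hpn : p > n + 1)
    (A : Matrix (Fin n) (Fin n) ℤ_[p]) (hA : A ^ p = 1) :
    A = 1 := by
  have hirr : Irreducible (cyclotomic p ℚ_[p]) :=
    cyclotomic_prime_irreducible_of_prime (R := ℤ_[p]) p PadicInt.prime_p
  have hmap_one : (1 : Matrix (Fin n) (Fin n) ℤ_[p]).map (algebraMap ℤ_[p] ℚ_[p]) = 1 :=
    Matrix.map_one _ (map_zero _) (map_one _)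
  have hB : A.map (algebraMap ℤ_[p] ℚ_[p]) ^ p = 1 := by
    rw [← Matrix.map_pow, hA, hmap_one]
  apply Matrix.map_injective (IsFractionRing.injective ℤ_[p] ℚ_[p])
  exact (Matrix.eq_one_of_pow_prime_eq_one hirr (by simpa using hpn) hB).trans hmap_one.symm
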